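/- Let S₀ and S₁ be finite nonempty point sets in the plane whose convex hulls are disjoint. Then there exist p ∈ S₀ and q ∈ S₁ such that both S₀ and S₁ are contained in RHP(p,q), i.e., an outer common tangent through a point of each set exists. -/

import Mathlib

noncomputable def perp (x : ℝ × ℝ) : ℝ × ℝ := (-x.2, x.1)

noncomputable def dotp (x y : ℝ × ℝ) : ℝ := x.1 * y.1 + x.2 * y.2

noncomputable def Tor (a b c : ℝ × ℝ) : ℝ := Real.sign (dotp (perp (b - a)) (c - b))

/-!
Separate the two hulls by a linear functional (Hahn–Banach) and rotate the plane so that this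
functional becomes the first coordinate: then `S₀` lies left and `S₁` right of a vertical line
`x = t`. Among the lines through a point `p ∈ S₀` and a point `q ∈ S₁`, take one meeting `x = t`
highest. If a point `c` were strictly left of `p → q`, the line through `p, c` (for `c ∈ S₁`) or
through `c, q` (for `c ∈ S₀`) would meet `x = t` higher still.
-/

lemma Real.sign_nonpos_of_nonpos {r : ℝ} (h : r ≤ 0) : Real.sign r ≤ 0 := by
  unfold Real.sign
  split_ifs <;> linarith

/-- Twice the signed area of the triangle `p q c`; positive iff `c` is strictly left of `p → q`. -/
def orient (p q c : ℝ × ℝ) : ℝ := (q.1 - p.1) * (c.2 - p.2) - (q.2 - p.2) * (c.1 - p.1)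

lemma tor_eq_sign_orient (p q c : ℝ × ℝ) : Tor p q c = Real.sign (orient p q c) := by
  simp only [Tor, orient, dotp, perp, Prod.fst_sub, Prod.snd_sub]
  ring_nf

lemma orient_swap (p q c : ℝ × ℝ) : orient q p c = -orient p q c := by
  simp only [orient]; ring

noncomputable def lineAt (t : ℝ) (p q : ℝ × ℝ) : ℝ := p.2 + (t - p.1) * (q.2 - p.2) / (q.1 - p.1)

lemma lineAt_comm (t : ℝ) {p q : ℝ × ℝ} (h : p.1 ≠ q.1) : lineAt t p q = lineAt t q p := by
  have h' : q.1 - p.1 ≠ 0 := sub_ne_zero.2 h.symm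
  have h'' : p.1 - q.1 ≠ 0 := sub_ne_zero.2 h
  simp only [lineAt]
  field_simp
  ring

lemma lineAt_sub_lineAt (t : ℝ) {p q c : ℝ × ℝ} (hq : q.1 ≠ p.1) (hc : c.1 ≠ p.1) :
    lineAt t p c - lineAt t p q = (t - p.1) * orient p q c / ((q.1 - p.1) * (c.1 - p.1)) := by
  have hq' : q.1 - p.1 ≠ 0 := sub_ne_zero.2 hq
  have hc' : c.1 - p.1 ≠ 0 := sub_ne_zero.2 hc
  simp only [lineAt, orient]
  field_simp
  ring

lemma lineAt_lt_lineAt_right {t : ℝ} {p q c : ℝ × ℝ} (hpt : p.1 < t) (hpq : p.1 < q.1)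
    (hpc : p.1 < c.1) (hc : 0 < orient p q c) : lineAt t p q < lineAt t p c := by
  have hdiff := lineAt_sub_lineAt t hpq.ne' hpc.ne'
  have hpos : 0 < (t - p.1) * orient p q c / ((q.1 - p.1) * (c.1 - p.1)) :=
    div_pos (mul_pos (sub_pos.2 hpt) hc) (mul_pos (sub_pos.2 hpq) (sub_pos.2 hpc))
  linarith

lemma lineAt_lt_lineAt_left {t : ℝ} {p q c : ℝ × ℝ} (hqt : t < q.1) (hpq : p.1 < q.1)
    (hcq : c.1 < q.1) (hc : 0 < orient p q c) : lineAt t p q < lineAt t c q := by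
  rw [lineAt_comm t hpq.ne, lineAt_comm t hcq.ne]
  have hdiff := lineAt_sub_lineAt t hpq.ne hcq.ne
  have hpos : 0 < (t - q.1) * orient q p c / ((p.1 - q.1) * (c.1 - q.1)) := by
    rw [orient_swap]
    apply div_pos
    · nlinarith [sub_neg.2 hqt]
    · nlinarith [sub_neg.2 hpq, sub_neg.2 hcq]
  linarith

lemma exists_orient_nonpos_of_fst_lt_of_lt_fst {A B : Set (ℝ × ℝ)} (hA : A.Finite)
    (hB : B.Finite) (hAne : A.Nonempty) (hBne : B.Nonempty) {t : ℝ}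
    (hAt : ∀ a ∈ A, a.1 < t) (hBt : ∀ b ∈ B, t < b.1) :
    ∃ p ∈ A, ∃ q ∈ B, ∀ c ∈ A ∪ B, orient p q c ≤ 0 := by
  obtain ⟨⟨p, q⟩, ⟨hp, hq⟩, hmax⟩ := Set.exists_max_image (A ×ˢ B)
    (fun pq => lineAt t pq.1 pq.2) (hA.prod hB) (hAne.prod hBne)
  refine ⟨p, hp, q, hq, fun c hc => not_lt.1 fun hpos => ?_⟩
  have hpq := (hAt p hp).trans (hBt q hq)
  rcases hc with hc | hc
  · exact (lineAt_lt_lineAt_left (hBt q hq) hpq ((hAt c hc).trans (hBt q hq)) hpos).not_ge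
      (hmax (c, q) ⟨hc, hq⟩)
  · exact (lineAt_lt_lineAt_right (hAt p hp) hpq ((hAt p hp).trans (hBt c hc)) hpos).not_ge
      (hmax (p, c) ⟨hp, hc⟩)

/-- A rotation-scaling turning the functional `x ↦ a * x.1 + b * x.2` into the first coordinate. -/
def rotScale (a b : ℝ) (x : ℝ × ℝ) : ℝ × ℝ := (a * x.1 + b * x.2, -b * x.1 + a * x.2)

lemma orient_rotScale (a b : ℝ) (p q c : ℝ × ℝ) :
    orient (rotScale a b p) (rotScale a b q) (rotScale a b c) = (a ^ 2 + b ^ 2) * orient p q c := by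
  simp only [orient, rotScale]; ring

lemma LinearMap.apply_eq_mul_fst_add_mul_snd {R : Type*} [CommSemiring R] (f : R × R →ₗ[R] R)
    (x : R × R) : f x = f (1, 0) * x.1 + f (0, 1) * x.2 := by
  have hx : x = x.1 • ((1 : R), (0 : R)) + x.2 • ((0 : R), (1 : R)) := by ext <;> simp
  conv_lhs => rw [hx, map_add, map_smul, map_smul, smul_eq_mul, smul_eq_mul]
  ring

lemma exists_orient_nonpos_of_separated {A B : Set (ℝ × ℝ)} (hA : A.Finite) (hB : B.Finite)
    (hAne : A.Nonempty) (hBne : B.Nonempty) (f : ℝ × ℝ →ₗ[ℝ] ℝ) {t : ℝ}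
    (hAt : ∀ a ∈ A, f a < t) (hBt : ∀ b ∈ B, t < f b) :
    ∃ p ∈ A, ∃ q ∈ B, ∀ c ∈ A ∪ B, orient p q c ≤ 0 := by
  set φ := rotScale (f (1, 0)) (f (0, 1))
  have hφ : ∀ x, (φ x).1 = f x := fun x => (f.apply_eq_mul_fst_add_mul_snd x).symm
  have hnorm : 0 < f (1, 0) ^ 2 + f (0, 1) ^ 2 := by
    by_contra! h
    have h₁ : f (1, 0) = 0 := by nlinarith [sq_nonneg (f (1, 0)), sq_nonneg (f (0, 1))]
    have h₂ : f (0, 1) = 0 := by nlinarith [sq_nonneg (f (1, 0)), sq_nonneg (f (0, 1))]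
    have hf : ∀ x, f x = 0 := fun x => by rw [f.apply_eq_mul_fst_add_mul_snd, h₁, h₂]; ring
    obtain ⟨a, ha⟩ := hAne
    obtain ⟨b, hb⟩ := hBne
    linarith [hAt a ha, hBt b hb, hf a, hf b]
  obtain ⟨_, ⟨p, hp, rfl⟩, _, ⟨q, hq, rfl⟩, hpq⟩ :=
    exists_orient_nonpos_of_fst_lt_of_lt_fst (hA.image φ) (hB.image φ) (hAne.image φ)
      (hBne.image φ) (t := t) (Set.forall_mem_image.2 fun a ha => hφ a ▸ hAt a ha)
      (Set.forall_mem_image.2 fun b hb => hφ b ▸ hBt b hb)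
  refine ⟨p, hp, q, hq, fun c hc => ?_⟩
  have hφc := hpq (φ c) (hc.imp (Set.mem_image_of_mem φ) (Set.mem_image_of_mem φ))
  rw [orient_rotScale] at hφc
  exact nonpos_of_mul_nonpos_right hφc hnorm

theorem stmt14_general (S₀ S₁ : Set (ℝ × ℝ)) (h₀fin : S₀.Finite) (h₁fin : S₁.Finite)
    (h₀ne : S₀.Nonempty) (h₁ne : S₁.Nonempty)
    (hdisj : convexHull ℝ S₀ ∩ convexHull ℝ S₁ = ∅) :
    ∃ p ∈ S₀, ∃ q ∈ S₁,
      S₀ ⊆ {c | Tor p q c ≤ 0} ∧ S₁ ⊆ {c | Tor p q c ≤ 0} := by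
  obtain ⟨f, u, v, hfu, huv, hfv⟩ := geometric_hahn_banach_compact_closed
    (convex_convexHull ℝ S₀) (h₀fin.isCompact_convexHull ℝ)
    (convex_convexHull ℝ S₁) (h₁fin.isCompact_convexHull ℝ).isClosed
    (Set.disjoint_iff_inter_eq_empty.2 hdisj)
  obtain ⟨p, hp, q, hq, horient⟩ := exists_orient_nonpos_of_separated h₀fin h₁fin h₀ne h₁ne f
    (fun a ha => hfu a (subset_convexHull ℝ S₀ ha))
    (fun b hb => huv.trans (hfv b (subset_convexHull ℝ S₁ hb)))
  have hTor : ∀ c ∈ S₀ ∪ S₁, Tor p q c ≤ 0 := fun c hc => by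
    rw [tor_eq_sign_orient]
    exact Real.sign_nonpos_of_nonpos (horient c hc)
  exact ⟨p, hp, q, hq, fun c hc => hTor c (.inl hc), fun c hc => hTor c (.inr hc)⟩

theorem stmt14 (S₀ S₁ : Set (ℝ × ℝ)) (h₀fin : S₀.Finite) (h₁fin : S₁.Finite)
    (h₀ne : S₀.Nonempty) (h₁ne : S₁.Nonempty)
    (hdisj : convexHull ℝ S₀ ∩ convexHull ℝ S₁ = ∅)
    (hSdisj : S₀ ∩ S₁ = ∅)
    (hgp : ∀ x ∈ S₀ ∪ S₁, ∀ y ∈ S₀ ∪ S₁, ∀ z ∈ S₀ ∪ S₁,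
      x ≠ y → y ≠ z → x ≠ z → ¬ Collinear ℝ ({x, y, z} : Set (ℝ × ℝ))) :
    ∃ p ∈ S₀, ∃ q ∈ S₁,
      S₀ ⊆ {c | Tor p q c ≤ 0} ∧ S₁ ⊆ {c | Tor p q c ≤ 0} :=
  stmt14_general S₀ S₁ h₀fin h₁fin h₀ne h₁ne hdisj
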